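/- arXiv:math/9807032 — 4 statements merged into one kernel-verified Lean document; each statement's English description precedes it below -/
import Mathlib

section
/- If π is the inverse limit of a directed system of groups πᵢ and G is any group, then the canonical homomorphism from the free product π * G to the inverse limit of the system πᵢ * G is injective. -/
/-!
A nontrivial element of `π ∗ G` is a reduced word with finitely many letters. Each nontrivial
letter from `π` is detected by some `φᵢ`, hence by every `φⱼ` with `j ≥ i`, since `φᵢ` factors
through `φⱼ`. Directedness gives one index `i` at which all letters stay nontrivial; the image
of the word in `πᵢ ∗ G` is then again reduced, hence nontrivial.
-/

open Filter

namespace Monoid.CoprodI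

variable {ι : Type*} {M N : ι → Type*} [∀ i, Monoid (M i)] [∀ i, Monoid (N i)]

def map (g : ∀ i, M i →* N i) : CoprodI M →* CoprodI N :=
  lift fun i => of.comp (g i)

@[simp]
theorem map_of (g : ∀ i, M i →* N i) {i : ι} (m : M i) : map g (of m) = of (g i m) :=
  lift_of _ _

namespace Word

def map (g : ∀ i, M i →* N i) (w : Word M) (hg : ∀ l ∈ w.toList, g l.1 l.2 ≠ 1) : Word N where
  toList := w.toList.map fun l => ⟨l.1, g l.1 l.2⟩
  ne_one _ hl := by
    obtain ⟨l, hl', rfl⟩ := List.mem_map.1 hl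
    exact hg l hl'
  chain_ne := List.isChain_map _ |>.2 w.chain_ne

theorem prod_map (g : ∀ i, M i →* N i) (w : Word M) (hg : ∀ l ∈ w.toList, g l.1 l.2 ≠ 1) :
    (w.map g hg).prod = CoprodI.map g w.prod := by
  simp only [prod, map, map_list_prod, List.map_map]
  exact congrArg List.prod (List.map_congr_left fun l _ => (map_of g l.2).symm)

theorem prod_injective [DecidableEq ι] [∀ i, DecidableEq (M i)] :
    Function.Injective (prod : Word M → CoprodI M) :=
  equiv.symm.injective

end Word

theorem eventually_map_ne_one {I : Type*} {F : Filter I} {N : I → ι → Type*}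
    [∀ k i, Monoid (N k i)] (g : ∀ k i, M i →* N k i)
    (hg : ∀ i (m : M i), m ≠ 1 → ∀ᶠ k in F, g k i m ≠ 1) {x : CoprodI M} (hx : x ≠ 1) :
    ∀ᶠ k in F, map (g k) x ≠ 1 := by
  classical
  set w := Word.equiv x
  have hxw : w.prod = x := Word.equiv.symm_apply_apply x
  have hw : w.toList ≠ [] := fun h => hx <| by rw [← hxw, Word.ext (y := .empty) h, Word.prod_empty]
  have hletters : ∀ᶠ k in F, ∀ l ∈ w.toList, g k l.1 l.2 ≠ 1 :=
    (eventually_all_finite (List.finite_toSet _)).2 fun l hl => hg l.1 l.2 (w.ne_one l hl)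
  filter_upwards [hletters] with k hk hone
  rw [← hxw, ← Word.prod_map _ _ hk, ← Word.prod_empty] at hone
  exact hw (List.map_eq_nil_iff.1 (congrArg Word.toList (Word.prod_injective hone)))

end Monoid.CoprodI

namespace Monoid.Coprod

universe u v u' v'

/-- `ULift` puts both summands of `M ∗ N` into one universe, so that `M ∗ N` can be compared
with the indexed coproduct over `Bool`. -/
def BoolFamily (M : Type u) (N : Type v) : Bool → Type max u v
  | true => ULift.{v} M
  | false => ULift.{u} N

instance (M : Type u) (N : Type v) [Monoid M] [Monoid N] : ∀ b, Monoid (BoolFamily M N b)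
  | true => inferInstanceAs (Monoid (ULift M))
  | false => inferInstanceAs (Monoid (ULift N))

variable {M : Type u} {N : Type v} {M' : Type u'} {N' : Type v'}
  [Monoid M] [Monoid N] [Monoid M'] [Monoid N']

def toCoprodI : M ∗ N →* CoprodI (BoolFamily M N) :=
  lift ((CoprodI.of (i := true)).comp MulEquiv.ulift.symm.toMonoidHom)
    ((CoprodI.of (i := false)).comp MulEquiv.ulift.symm.toMonoidHom)

def ofCoprodI : CoprodI (BoolFamily M N) →* M ∗ N :=
  CoprodI.lift fun
    | true => inl.comp MulEquiv.ulift.toMonoidHom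
    | false => inr.comp MulEquiv.ulift.toMonoidHom

theorem ofCoprodI_comp_toCoprodI :
    (ofCoprodI : CoprodI (BoolFamily M N) →* M ∗ N).comp toCoprodI = MonoidHom.id _ := by
  ext <;> rfl

theorem toCoprodI_injective : Function.Injective (toCoprodI : M ∗ N →* _) :=
  Function.LeftInverse.injective (DFunLike.congr_fun ofCoprodI_comp_toCoprodI)

def boolFamilyMap (f : M →* M') (g : N →* N') : ∀ b, BoolFamily M N b →* BoolFamily M' N' b
  | true => MulEquiv.ulift.symm.toMonoidHom.comp (f.comp MulEquiv.ulift.toMonoidHom)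
  | false => MulEquiv.ulift.symm.toMonoidHom.comp (g.comp MulEquiv.ulift.toMonoidHom)

theorem toCoprodI_comp_map (f : M →* M') (g : N →* N') :
    toCoprodI.comp (map f g) = (CoprodI.map (boolFamilyMap f g)).comp toCoprodI := by
  ext <;> rfl

theorem eventually_map_ne_one {I : Type*} {F : Filter I} {M' : I → Type u'} {N' : I → Type v'}
    [∀ k, Monoid (M' k)] [∀ k, Monoid (N' k)] (f : ∀ k, M →* M' k) (g : ∀ k, N →* N' k)
    (hf : ∀ m : M, m ≠ 1 → ∀ᶠ k in F, f k m ≠ 1) (hg : ∀ n : N, n ≠ 1 → ∀ᶠ k in F, g k n ≠ 1)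
    {x : M ∗ N} (hx : x ≠ 1) : ∀ᶠ k in F, map (f k) (g k) x ≠ 1 := by
  have hletters : ∀ b (m : BoolFamily M N b), m ≠ 1 →
      ∀ᶠ k in F, boolFamilyMap (f k) (g k) b m ≠ 1
    | true, m, hm => (hf m.down fun h => hm (congrArg ULift.up h)).mono
        fun _ hk h => hk (congrArg ULift.down h)
    | false, n, hn => (hg n.down fun h => hn (congrArg ULift.up h)).mono
        fun _ hk h => hk (congrArg ULift.down h)
  have hx' : toCoprodI x ≠ 1 := (map_ne_one_iff _ toCoprodI_injective).2 hx
  filter_upwards [CoprodI.eventually_map_ne_one _ hletters hx'] with k hk hone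
  rw [← MonoidHom.comp_apply, ← toCoprodI_comp_map, MonoidHom.comp_apply, hone, map_one] at hk
  exact hk rfl

end Monoid.Coprod

theorem stmt_6_general {I : Type*} [Preorder I] [IsDirected I (· ≤ ·)] [Nonempty I]
    (P : I → Type*) [∀ i, Group (P i)] (G π : Type*) [Group G] [Group π]
    (f : ∀ i j, i ≤ j → (P j →* P i))
    (φ : ∀ i, π →* P i)
    (hcompat : ∀ i j (hij : i ≤ j), (f i j hij).comp (φ j) = φ i)
    (hinj : ∀ g : π, (∀ i, φ i g = 1) → g = 1) :
    Function.Injective (fun x : Monoid.Coprod π G =>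
      fun i : I => Monoid.Coprod.map (φ i) (MonoidHom.id G) x) := by
  have hφ : ∀ g : π, g ≠ 1 → ∀ᶠ i in atTop, φ i g ≠ 1 := by
    intro g hg
    obtain ⟨i, hi⟩ : ∃ i, φ i g ≠ 1 := by
      by_contra! h
      exact hg (hinj g h)
    filter_upwards [eventually_ge_atTop i] with j hij hj
    exact hi (by rw [← hcompat i j hij, MonoidHom.comp_apply, hj, map_one])
  refine (injective_iff_map_eq_one
    (MonoidHom.pi fun i => Monoid.Coprod.map (φ i) (MonoidHom.id G))).2 fun x hx => ?_
  by_contra hx1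
  obtain ⟨i, hi⟩ := (Monoid.Coprod.eventually_map_ne_one φ (fun _ => MonoidHom.id G)
    hφ (fun _ hg => .of_forall fun _ => hg) hx1).exists
  exact hi (congrFun hx i)

/-- If `π` is the inverse limit of a directed system of groups `πᵢ` (with projections
`φᵢ : π →* πᵢ`, compatible with the transition maps, such that an element of `π` is
trivial iff all its images are trivial) and `G` is any group, then the canonical
homomorphism from the free product `π * G` into the inverse limit of the system
`πᵢ * G` (realized inside the product) is injective. -/
theorem stmt_6 {I : Type*} [Preorder I] [IsDirected I (· ≤ ·)] [Nonempty I]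
    (P : I → Type*) [∀ i, Group (P i)] (G π : Type*) [Group G] [Group π]
    (f : ∀ i j, i ≤ j → (P j →* P i))
    (hf : ∀ i j k (hij : i ≤ j) (hjk : j ≤ k),
      (f i j hij).comp (f j k hjk) = f i k (le_trans hij hjk))
    (φ : ∀ i, π →* P i)
    (hcompat : ∀ i j (hij : i ≤ j), (f i j hij).comp (φ j) = φ i)
    (hinj : ∀ g : π, (∀ i, φ i g = 1) → g = 1) :
    Function.Injective (fun x : Monoid.Coprod π G =>
      fun i : I => Monoid.Coprod.map (φ i) (MonoidHom.id G) x) :=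
  stmt_6_general P G π f φ hcompat hinj
end

section
/- Every amenable discrete homogeneous space admits an amenable exhaustion: if π/U carries a π-invariant integer-valued metric with finite balls such that for every K > 0 and ε > 0 there is a finite subset X with |N_K(X)| ≤ ε|X|, then there exists a nested sequence of finite subsets K₁ ⊆ K₂ ⊆ … with ⋃ Kₙ = π/U and for all K, ε > 0 there is N with |N_K(Kᵢ)| ≤ ε|Kᵢ| for all i ≥ N. -/
/-- The `K`-neighborhood of the boundary of a finite subset `X`:
points within distance `K` both of `X` and of its complement. -/
def nbd {Y : Type*} (dmet : Y → Y → ℕ) (K : ℕ) (X : Finset Y) : Set Y :=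
  {y | (∃ z ∈ X, dmet y z ≤ K) ∧ (∃ z : Y, z ∉ X ∧ dmet y z ≤ K)}

set_option linter.unusedSectionVars false

section aux
variable {π Y : Type*} [Group π] [MulAction π Y] [DecidableEq Y] (dmet : Y → Y → ℕ)

theorem nbd_mono {K K' : ℕ} (h : K ≤ K') (X : Finset Y) :
    nbd dmet K X ⊆ nbd dmet K' X := by
  rintro y ⟨⟨z, hz, hd⟩, ⟨w, hw, hd'⟩⟩
  exact ⟨⟨z, hz, hd.trans h⟩, ⟨w, hw, hd'.trans h⟩⟩

theorem nbd_union (K : ℕ) (X X' : Finset Y) :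
    nbd dmet K (X ∪ X') ⊆ nbd dmet K X ∪ nbd dmet K X' := by
  rintro y ⟨⟨z, hz, hd⟩, ⟨w, hw, hd'⟩⟩
  simp only [Finset.mem_union, not_or] at hz hw
  rcases hz with hz | hz
  · exact Or.inl ⟨⟨z, hz, hd⟩, ⟨w, hw.1, hd'⟩⟩
  · exact Or.inr ⟨⟨z, hz, hd⟩, ⟨w, hw.2, hd'⟩⟩

theorem nbd_smul (hinv : ∀ (g : π) (y z : Y), dmet (g • y) (g • z) = dmet y z)
    (K : ℕ) (X : Finset Y) (g : π) :
    nbd dmet K (X.image (g • ·)) = (g • ·) '' nbd dmet K X := by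
  ext y
  constructor
  · rintro ⟨⟨z, hz, hd⟩, ⟨w, hw, hd'⟩⟩
    simp only [Finset.mem_image] at hz
    obtain ⟨x, hx, rfl⟩ := hz
    refine ⟨g⁻¹ • y, ⟨⟨x, hx, ?_⟩, ⟨g⁻¹ • w, ?_, ?_⟩⟩, by simp⟩
    · rw [← hinv g]; simpa using hd
    · intro hmem
      exact hw (Finset.mem_image.2 ⟨_, hmem, by simp⟩)
    · rw [← hinv g]; simpa using hd'
  · rintro ⟨x, ⟨⟨z, hz, hd⟩, ⟨w, hw, hd'⟩⟩, rfl⟩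
    refine ⟨⟨g • z, Finset.mem_image_of_mem _ hz, by simpa [hinv] using hd⟩,
      ⟨g • w, ?_, by simpa [hinv] using hd'⟩⟩
    intro hmem
    obtain ⟨x', hx', heq⟩ := Finset.mem_image.1 hmem
    exact hw ((MulAction.injective g heq) ▸ hx')

theorem ball_ncard (htrans : ∀ y z : Y, ∃ g : π, g • y = z)
    (hinv : ∀ (g : π) (y z : Y), dmet (g • y) (g • z) = dmet y z) (y z : Y) (K : ℕ) :
    {w | dmet z w ≤ K}.ncard = {w | dmet y w ≤ K}.ncard := by
  obtain ⟨g, rfl⟩ := htrans y z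
  have h : {w | dmet (g • y) w ≤ K} = (g • ·) '' {w | dmet y w ≤ K} := by
    ext w
    simp only [Set.mem_image, Set.mem_setOf_eq]
    constructor
    · intro h
      exact ⟨g⁻¹ • w, by rw [← hinv g]; simpa, by simp⟩
    · rintro ⟨v, hv, rfl⟩
      rwa [hinv]
  rw [h, Set.ncard_image_of_injective _ (MulAction.injective g)]

theorem nbd_subset (hsymm : ∀ y z, dmet y z = dmet z y)
    (hball : ∀ (y : Y) (K : ℕ), {z : Y | dmet y z ≤ K}.Finite) (K : ℕ) (X : Finset Y) :
    nbd dmet K X ⊆ ↑(X.biUnion fun x => (hball x K).toFinset) := by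
  rintro y ⟨⟨z, hz, hd⟩, -⟩
  refine Finset.mem_coe.2 (Finset.mem_biUnion.2 ⟨z, hz, (hball z K).mem_toFinset.2 ?_⟩)
  show dmet z y ≤ K
  rw [← hsymm]; exact hd

theorem nbd_finite (hsymm : ∀ y z, dmet y z = dmet z y)
    (hball : ∀ (y : Y) (K : ℕ), {z : Y | dmet y z ≤ K}.Finite) (K : ℕ) (X : Finset Y) :
    (nbd dmet K X).Finite :=
  Set.Finite.subset (Finset.finite_toSet _) (nbd_subset dmet hsymm hball K X)

theorem nbd_ncard_le (htrans : ∀ y z : Y, ∃ g : π, g • y = z)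
    (hsymm : ∀ y z, dmet y z = dmet z y)
    (hinv : ∀ (g : π) (y z : Y), dmet (g • y) (g • z) = dmet y z)
    (hball : ∀ (y : Y) (K : ℕ), {z : Y | dmet y z ≤ K}.Finite)
    (y₀ : Y) (K : ℕ) (X : Finset Y) :
    (nbd dmet K X).ncard ≤ X.card * {z | dmet y₀ z ≤ K}.ncard := by
  calc (nbd dmet K X).ncard
      ≤ ((X.biUnion fun x => (hball x K).toFinset : Finset Y) : Set Y).ncard :=
        Set.ncard_le_ncard (nbd_subset dmet hsymm hball K X) (Finset.finite_toSet _)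
    _ = (X.biUnion fun x => (hball x K).toFinset).card := Set.ncard_coe_finset _
    _ ≤ ∑ x ∈ X, (hball x K).toFinset.card := Finset.card_biUnion_le
    _ = ∑ _x ∈ X, {z | dmet y₀ z ≤ K}.ncard := by
        refine Finset.sum_congr rfl fun x _ => ?_
        rw [← Set.ncard_eq_toFinset_card _ (hball x K), ball_ncard dmet htrans hinv y₀ x K]
    _ = X.card * {z | dmet y₀ z ≤ K}.ncard := by rw [Finset.sum_const, smul_eq_mul]

end aux

section aux2
variable {π Y : Type*} [Group π] [MulAction π Y] [DecidableEq Y] [Infinite Y]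
  (dmet : Y → Y → ℕ)
  (htrans : ∀ y z : Y, ∃ g : π, g • y = z)
  (hsymm : ∀ y z, dmet y z = dmet z y)
  (hinv : ∀ (g : π) (y z : Y), dmet (g • y) (g • z) = dmet y z)
  (hball : ∀ (y : Y) (K : ℕ), {z : Y | dmet y z ≤ K}.Finite)

include htrans hsymm hinv hball in
theorem exists_translate (F B : Finset Y) (hF : F.Nonempty) :
    ∃ g : π, ∀ x ∈ F, g • x ∉ B := by
  obtain ⟨y₀, hy₀⟩ := hF
  set R := F.sup (dmet y₀) with hR
  have hRle : ∀ x ∈ F, dmet y₀ x ≤ R := fun x hx => Finset.le_sup hx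
  obtain ⟨z, hz⟩ := Infinite.exists_notMem_finset (B.biUnion fun b => (hball b R).toFinset)
  obtain ⟨g, hg⟩ := htrans y₀ z
  refine ⟨g, fun x hx hmem => hz ?_⟩
  refine Finset.mem_biUnion.2 ⟨g • x, hmem, (hball _ R).mem_toFinset.2 ?_⟩
  show dmet (g • x) z ≤ R
  rw [← hg, hinv, hsymm]
  exact hRle x hx

include htrans hsymm hinv hball in
theorem exists_copies (F : Finset Y) (hF : F.Nonempty) (m : ℕ) :
    ∃ B : Finset Y, m * F.card ≤ B.card ∧
      ∀ K : ℕ, (nbd dmet K B).ncard ≤ m * (nbd dmet K F).ncard := by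
  induction m with
  | zero =>
    refine ⟨∅, by simp, fun K => ?_⟩
    have h : nbd dmet K (∅ : Finset Y) = ∅ := by
      ext y; simp [nbd]
    simp [h]
  | succ m ih =>
    obtain ⟨B, hcard, hnbd⟩ := ih
    obtain ⟨g, hg⟩ := exists_translate dmet htrans hsymm hinv hball F B hF
    refine ⟨B ∪ F.image (g • ·), ?_, fun K => ?_⟩
    · have hdisj : Disjoint B (F.image (g • ·)) := by
        rw [Finset.disjoint_right]
        intro a ha
        obtain ⟨x, hx, rfl⟩ := Finset.mem_image.1 ha
        exact hg x hx
      rw [Finset.card_union_of_disjoint hdisj,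
        Finset.card_image_of_injective _ (MulAction.injective g), Nat.succ_mul]
      omega
    · calc (nbd dmet K (B ∪ F.image (g • ·))).ncard
          ≤ (nbd dmet K B ∪ nbd dmet K (F.image (g • ·))).ncard :=
            Set.ncard_le_ncard (nbd_union dmet K _ _)
              ((nbd_finite dmet hsymm hball K B).union (nbd_finite dmet hsymm hball K _))
        _ ≤ (nbd dmet K B).ncard + (nbd dmet K (F.image (g • ·))).ncard :=
            Set.ncard_union_le _ _
        _ = (nbd dmet K B).ncard + (nbd dmet K F).ncard := by
            rw [nbd_smul dmet hinv, Set.ncard_image_of_injective _ (MulAction.injective g)]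
        _ ≤ m * (nbd dmet K F).ncard + (nbd dmet K F).ncard :=
            Nat.add_le_add_right (hnbd K) _
        _ = (m + 1) * (nbd dmet K F).ncard := by rw [Nat.succ_mul]


include htrans hsymm hinv hball in
theorem step_lemma
    (hamen : ∀ K : ℕ, 0 < K → ∀ ε : ℝ, 0 < ε → ∃ X : Finset Y, X.Nonempty ∧
      ((nbd dmet K X).ncard : ℝ) ≤ ε * X.card)
    (y₀ : Y) (i : ℕ) (P : Finset Y) (tp : Y) :
    ∃ Q : Finset Y, P ⊆ Q ∧ tp ∈ Q ∧ ∀ K ≤ i + 1,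
      ((i : ℝ) + 1) * (nbd dmet K Q).ncard ≤
        (({z | dmet y₀ z ≤ K}.ncard : ℝ) + 1) * Q.card := by
  have hεpos : (0 : ℝ) < 1 / (2 * ((i : ℝ) + 2)) := by positivity
  obtain ⟨F, hFne, hFbound⟩ := hamen (i + 1) (Nat.succ_pos i) _ hεpos
  set m := (i + 1) * P.card + 1 with hm
  obtain ⟨B, hBcard, hBnbd⟩ := exists_copies dmet htrans hsymm hinv hball F hFne m
  obtain ⟨x₀, hx₀⟩ := hFne
  obtain ⟨g, hg⟩ := htrans x₀ tp
  set A := F.image (g • ·) with hA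
  refine ⟨P ∪ B ∪ A, Finset.subset_union_left.trans Finset.subset_union_left,
    Finset.mem_union_right _ (Finset.mem_image.2 ⟨x₀, hx₀, hg⟩), ?_⟩
  intro K hK
  -- notation
  set bK := {z | dmet y₀ z ≤ K}.ncard with hbK
  set cF := (nbd dmet (i + 1) F).ncard with hcF
  -- natural-number estimate
  have hA1n : (nbd dmet K (P ∪ B ∪ A)).ncard ≤ P.card * bK + m * cF + cF := by
    have s1 : nbd dmet K (P ∪ B ∪ A) ⊆
        (nbd dmet K P ∪ nbd dmet K B) ∪ nbd dmet K A := by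
      intro y hy
      rcases nbd_union dmet K (P ∪ B) A hy with h | h
      · exact Or.inl (nbd_union dmet K P B h)
      · exact Or.inr h
    have fP := nbd_finite dmet hsymm hball K P
    have fB := nbd_finite dmet hsymm hball K B
    have fA := nbd_finite dmet hsymm hball K A
    have e1 : (nbd dmet K (P ∪ B ∪ A)).ncard ≤
        ((nbd dmet K P ∪ nbd dmet K B) ∪ nbd dmet K A).ncard :=
      Set.ncard_le_ncard s1 (Set.Finite.union (fP.union fB) fA)
    have e2 : ((nbd dmet K P ∪ nbd dmet K B) ∪ nbd dmet K A).ncard ≤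
        (nbd dmet K P).ncard + (nbd dmet K B).ncard + (nbd dmet K A).ncard :=
      le_trans (Set.ncard_union_le _ _)
        (Nat.add_le_add_right (Set.ncard_union_le _ _) _)
    have e3 : (nbd dmet K P).ncard ≤ P.card * bK :=
      nbd_ncard_le dmet htrans hsymm hinv hball y₀ K P
    have e4 : (nbd dmet K B).ncard ≤ m * cF := by
      refine le_trans (hBnbd K) (Nat.mul_le_mul_left _ ?_)
      exact Set.ncard_le_ncard (nbd_mono dmet hK F) (nbd_finite dmet hsymm hball _ F)
    have e5 : (nbd dmet K A).ncard ≤ cF := by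
      have : (nbd dmet K A).ncard = (nbd dmet K F).ncard := by
        rw [hA, nbd_smul dmet hinv, Set.ncard_image_of_injective _ (MulAction.injective g)]
      rw [this]
      exact Set.ncard_le_ncard (nbd_mono dmet hK F) (nbd_finite dmet hsymm hball _ F)
    omega
  -- pass to the reals
  have hFc1 : 1 ≤ F.card := Finset.card_pos.2 ⟨x₀, hx₀⟩
  have hBQ : B.card ≤ (P ∪ B ∪ A).card :=
    Finset.card_le_card (Finset.subset_union_right.trans Finset.subset_union_left)
  have A1 : ((nbd dmet K (P ∪ B ∪ A)).ncard : ℝ) ≤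
      (P.card : ℝ) * bK + ((m : ℝ) + 1) * cF := by
    have := (Nat.cast_le (α := ℝ)).2 hA1n
    push_cast at this ⊢
    linarith
  have A2 : 2 * ((i : ℝ) + 2) * cF ≤ F.card := by
    rw [show (1 / (2 * ((i : ℝ) + 2))) * F.card = (F.card : ℝ) / (2 * ((i : ℝ) + 2)) by
      ring, le_div_iff₀ (by positivity)] at hFbound
    rw [hcF]
    linarith
  have A3 : (m : ℝ) * F.card ≤ (P ∪ B ∪ A).card := by
    have h1 : (m * F.card : ℕ) ≤ ((P ∪ B ∪ A).card : ℕ) := le_trans hBcard hBQ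
    exact_mod_cast h1
  have A4 : ((i : ℝ) + 1) * P.card + 1 = m := by rw [hm]; push_cast; ring
  have A5 : (1 : ℝ) ≤ F.card := by exact_mod_cast hFc1
  have hm1 : (1 : ℝ) ≤ m := by
    have h : 1 ≤ m := by omega
    exact_mod_cast h
  have hc0 : (0 : ℝ) ≤ cF := Nat.cast_nonneg _
  have hb0 : (0 : ℝ) ≤ (bK : ℝ) := Nat.cast_nonneg _
  have hm0 : (0 : ℝ) ≤ m := by linarith
  have hi0 : (0 : ℝ) ≤ (i : ℝ) := Nat.cast_nonneg _
  -- combine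
  have hp1 : ((i : ℝ) + 1) * P.card ≤ (P ∪ B ∪ A).card := by
    nlinarith [mul_le_mul_of_nonneg_left A5 hm0]
  have hterm2 : ((i : ℝ) + 1) * (((m : ℝ) + 1) * cF) ≤ (P ∪ B ∪ A).card := by
    nlinarith [mul_le_mul_of_nonneg_left A2 hm0, mul_nonneg hc0 hm0,
      mul_nonneg (mul_nonneg hc0 hi0) (by linarith : (0:ℝ) ≤ (m:ℝ) - 1),
      mul_nonneg hc0 (by linarith : (0:ℝ) ≤ (m:ℝ) - 1)]
  nlinarith [mul_le_mul_of_nonneg_right hp1 hb0,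
    mul_le_mul_of_nonneg_left A1 (by positivity : (0:ℝ) ≤ (i : ℝ) + 1)]

end aux2


/-- Every amenable discrete homogeneous space admits an amenable exhaustion: if `π/U`
(here an arbitrary transitive `π`-set `Y`) carries a `π`-invariant integer-valued metric
with finite balls, such that for every `K > 0` and `ε > 0` there is a finite subset `X`
with `|N_K(X)| ≤ ε|X|`, then there is a nested sequence of finite subsets `K₁ ⊆ K₂ ⊆ …`
with `⋃ Kₙ = Y` and: for all `K, ε > 0` there is `N` with `|N_K(Kᵢ)| ≤ ε|Kᵢ|` for all
`i ≥ N`. -/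
theorem stmt_7 {π Y : Type*} [Group π] [MulAction π Y] [Nonempty Y]
    (htrans : ∀ y z : Y, ∃ g : π, g • y = z)
    (dmet : Y → Y → ℕ)
    (hzero : ∀ y z, dmet y z = 0 ↔ y = z)
    (hsymm : ∀ y z, dmet y z = dmet z y)
    (htri : ∀ x y z, dmet x z ≤ dmet x y + dmet y z)
    (hinv : ∀ (g : π) (y z : Y), dmet (g • y) (g • z) = dmet y z)
    (hball : ∀ (y : Y) (K : ℕ), {z : Y | dmet y z ≤ K}.Finite)
    (hamen : ∀ K : ℕ, 0 < K → ∀ ε : ℝ, 0 < ε → ∃ X : Finset Y, X.Nonempty ∧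
      ((nbd dmet K X).ncard : ℝ) ≤ ε * X.card) :
    ∃ E : ℕ → Finset Y, (∀ n, E n ⊆ E (n + 1)) ∧ (⋃ n, (E n : Set Y)) = Set.univ ∧
      ∀ K : ℕ, 0 < K → ∀ ε : ℝ, 0 < ε → ∃ N : ℕ, ∀ i ≥ N,
        ((nbd dmet K (E i)).ncard : ℝ) ≤ ε * (E i).card := by
  classical
  obtain ⟨y₀⟩ := ‹Nonempty Y›
  cases finite_or_infinite Y with
  | inl hfin =>
    haveI := Fintype.ofFinite Y
    refine ⟨fun _ => Finset.univ, fun n => subset_rfl, by simp [Set.iUnion_const], ?_⟩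
    intro K hK ε hε
    refine ⟨0, fun i _ => ?_⟩
    have h : nbd dmet K (Finset.univ : Finset Y) = ∅ := by
      ext y
      simp [nbd]
    rw [h]
    simp only [Set.ncard_empty, Nat.cast_zero]
    positivity
  | inr hinf =>
    have hcount : Countable Y := by
      have hsub : (Set.univ : Set Y) ⊆ ⋃ n : ℕ, {z | dmet y₀ z ≤ n} :=
        fun z _ => Set.mem_iUnion.2 ⟨dmet y₀ z, show dmet y₀ z ≤ dmet y₀ z from le_rfl⟩
      exact Set.countable_univ_iff.1
        ((Set.countable_iUnion fun n => (hball y₀ n).countable).mono hsub)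
    obtain ⟨t, ht⟩ := exists_surjective_nat Y
    have step : ∀ (i : ℕ) (P : Finset Y), ∃ Q : Finset Y, P ⊆ Q ∧ t (i + 1) ∈ Q ∧
        ∀ K ≤ i + 1, ((i : ℝ) + 1) * (nbd dmet K Q).ncard ≤
          (({z | dmet y₀ z ≤ K}.ncard : ℝ) + 1) * Q.card :=
      fun i P => step_lemma dmet htrans hsymm hinv hball hamen y₀ i P (t (i + 1))
    choose f hf1 hf2 hf3 using step
    refine ⟨fun n => Nat.rec {t 0} (fun i Q => f i Q) n, fun n => hf1 n _, ?_, ?_⟩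
    · apply Set.eq_univ_of_forall
      intro y
      obtain ⟨n, rfl⟩ := ht y
      have hmem : ∀ n : ℕ, t n ∈ (Nat.rec {t 0} (fun i Q => f i Q) n : Finset Y) := by
        intro n
        cases n with
        | zero => exact Finset.mem_singleton_self _
        | succ n => exact hf2 n _
      exact Set.mem_iUnion.2 ⟨n, Finset.mem_coe.2 (hmem n)⟩
    · intro K hK ε hε
      set b : ℝ := ({z | dmet y₀ z ≤ K}.ncard : ℝ) with hb
      obtain ⟨N₀, hN₀⟩ := exists_nat_gt ((b + 1) / ε)
      refine ⟨max (max K N₀) 1, fun i hi => ?_⟩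
      obtain ⟨j, rfl⟩ : ∃ j, i = j + 1 := ⟨i - 1, by omega⟩
      have hKj : K ≤ j + 1 := le_trans (le_max_left K N₀) (le_trans (le_max_left _ 1) hi)
      have hNj : N₀ ≤ j + 1 := le_trans (le_max_right K N₀) (le_trans (le_max_left _ 1) hi)
      have h1 := hf3 j (Nat.rec {t 0} (fun i Q => f i Q) j) K hKj
      have h2 : b + 1 < ε * ((j : ℝ) + 1) := by
        have hd : b + 1 < N₀ * ε := (div_lt_iff₀ hε).1 hN₀
        have hc : (N₀ : ℝ) ≤ (j : ℝ) + 1 := by exact_mod_cast hNj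
        nlinarith
      have hcard0 : (0 : ℝ) ≤ ((f j (Nat.rec {t 0} (fun i Q => f i Q) j)).card : ℝ) :=
        Nat.cast_nonneg _
      have hjpos : (0 : ℝ) < (j : ℝ) + 1 := by positivity
      show ((nbd dmet K (f j (Nat.rec {t 0} (fun i Q => f i Q) j))).ncard : ℝ) ≤ _
      nlinarith [mul_le_mul_of_nonneg_right (le_of_lt h2) hcard0]
end

section
/- Let Δ be a positive self-adjoint d×d matrix over a finite von Neumann algebra N with normalized positive normal trace tr, and let λ ≥ 0, n ∈ ℕ, K ≥ ‖Δ‖. If p: ℝ → ℝ satisfies χ_{[0,λ]}(x) ≤ p(x) ≤ (1/n)·χ_{[0,K]}(x) + χ_{[0,λ+1/n]}(x) for all 0 ≤ x ≤ K, then F_Δ(λ) ≤ tr(p(Δ)) ≤ d/n + F_Δ(λ + 1/n), where F_Δ(μ) := tr(χ_{[0,μ]}(Δ)) is the spectral density function. -/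
open MeasureTheory Set

section ConcentratedMeasure

variable {α : Type*} [MeasurableSpace α] {μ : Measure α} [IsFiniteMeasure μ] {S : Set α}
  {p : α → ℝ}

theorem measureReal_le_integral_of_indicator_le_on (hS : μ Sᶜ = 0) {s : Set α}
    (hs : MeasurableSet s) (hp : Integrable p μ) (h : ∀ x ∈ S, s.indicator 1 x ≤ p x) :
    μ.real s ≤ ∫ x, p x ∂μ := by
  rw [← integral_indicator_one hs]
  exact integral_mono_ae ((integrable_const 1).indicator hs) hp (ae_iff.2 hS |>.mono h)

theorem integral_le_of_le_indicator_add_on (hS : μ Sᶜ = 0) {t u : Set α}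
    (ht : MeasurableSet t) (hu : MeasurableSet u) (hp : Integrable p μ) (c : ℝ)
    (h : ∀ x ∈ S, p x ≤ c * t.indicator 1 x + u.indicator 1 x) :
    ∫ x, p x ∂μ ≤ c * μ.real t + μ.real u := by
  have hit : Integrable (t.indicator (1 : α → ℝ)) μ := (integrable_const 1).indicator ht
  have hiu : Integrable (u.indicator (1 : α → ℝ)) μ := (integrable_const 1).indicator hu
  calc ∫ x, p x ∂μ ≤ ∫ x, (c * t.indicator 1 x + u.indicator 1 x) ∂μ :=
        integral_mono_ae hp ((hit.const_mul c).add hiu) (ae_iff.2 hS |>.mono h)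
    _ = c * μ.real t + μ.real u := by
        rw [integral_add (hit.const_mul c) hiu, integral_const_mul, integral_indicator_one ht,
          integral_indicator_one hu]

end ConcentratedMeasure

theorem stmt_8_general {d n : ℕ} (K lam : ℝ)
    (μ : Measure ℝ) [IsFiniteMeasure μ]
    (hsupp : μ (Icc 0 K)ᶜ = 0) (hnorm : (μ (Icc 0 K)).toReal = d)
    (p : ℝ → ℝ) (hint : Integrable p μ)
    (hp : ∀ x ∈ Icc (0 : ℝ) K,
      indicator (Icc 0 lam) (fun _ => (1 : ℝ)) x ≤ p x ∧
      p x ≤ (1 / (n : ℝ)) * indicator (Icc 0 K) (fun _ => (1 : ℝ)) x +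
        indicator (Icc 0 (lam + 1 / (n : ℝ))) (fun _ => (1 : ℝ)) x) :
    (μ (Icc 0 lam)).toReal ≤ ∫ x, p x ∂μ ∧
      ∫ x, p x ∂μ ≤ (d : ℝ) / n + (μ (Icc 0 (lam + 1 / (n : ℝ)))).toReal := by
  refine ⟨measureReal_le_integral_of_indicator_le_on hsupp measurableSet_Icc hint
    fun x hx => (hp x hx).1, ?_⟩
  have hupper := integral_le_of_le_indicator_add_on hsupp measurableSet_Icc measurableSet_Icc
    hint (1 / (n : ℝ)) fun x hx => (hp x hx).2
  rwa [measureReal_def, hnorm, one_div_mul_eq_div] at hupper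

/-- Trace estimate for functions squeezed between spectral characteristic functions.
The positive self-adjoint `d × d` matrix `Δ` over a finite von Neumann algebra with
normalized positive normal trace `tr`, with `‖Δ‖ ≤ K`, is encoded by its spectral
measure `μ` with respect to the trace: `μ` is supported on `[0, K]`, has total mass
`tr(1) = d`, `F_Δ(lam) = μ([0, lam])` and `tr(p(Δ)) = ∫ p dμ`.  If
`χ_[0,lam] ≤ p ≤ (1/n)·χ_[0,K] + χ_[0,lam+1/n]` on `[0, K]`, then
`F_Δ(lam) ≤ tr(p(Δ)) ≤ d/n + F_Δ(lam + 1/n)`. -/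
theorem stmt_8 {d n : ℕ} (hn : 0 < n) (K lam : ℝ) (hlam : 0 ≤ lam) (hK : 0 ≤ K)
    (μ : Measure ℝ) [IsFiniteMeasure μ]
    (hsupp : μ (Icc 0 K)ᶜ = 0) (hnorm : (μ (Icc 0 K)).toReal = d)
    (p : ℝ → ℝ) (hint : Integrable p μ)
    (hp : ∀ x ∈ Icc (0 : ℝ) K,
      indicator (Icc 0 lam) (fun _ => (1 : ℝ)) x ≤ p x ∧
      p x ≤ (1 / (n : ℝ)) * indicator (Icc 0 K) (fun _ => (1 : ℝ)) x +
        indicator (Icc 0 (lam + 1 / (n : ℝ))) (fun _ => (1 : ℝ)) x) :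
    (μ (Icc 0 lam)).toReal ≤ ∫ x, p x ∂μ ∧
      ∫ x, p x ∂μ ≤ (d : ℝ) / n + (μ (Icc 0 (lam + 1 / (n : ℝ)))).toReal :=
  stmt_8_general K lam μ hsupp hnorm p hint hp
end

section
/- Let Δ be a positive self-adjoint operator on l²(π)^d, and let (Δᵢ)ᵢ be a net of positive self-adjoint operators (over groups πᵢ with normalized traces trᵢ) such that: (a) there is K with ‖Δᵢ‖ ≤ K for all i and ‖Δ‖ ≤ K, and (b) for every polynomial p, tr_π(p(Δ)) = limᵢ trᵢ(p(Δᵢ)). Define F̄(λ) := limsupᵢ F_{Δᵢ}(λ) and F̲(λ) := liminfᵢ F_{Δᵢ}(λ). Then F̄(λ) ≤ F_Δ(λ) ≤ F̲⁺(λ) for all λ, and F_Δ(λ) = F̲⁺(λ) = F̄⁺(λ), where G⁺(λ) := lim_{ε→0⁺} G(λ+ε). -/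
open MeasureTheory Filter Set

/-- The spectral density function of (the spectral measure of) `Δ`:
`F_Δ(lam) = μ([0, lam])`. -/
noncomputable def sdf (μ : Measure ℝ) (lam : ℝ) : ℝ := (μ (Icc 0 lam)).toReal

/-- The right-continuous regularization `G⁺(lam) = lim_{ε→0⁺} G(lam+ε)` of a monotone
function `G`. -/
noncomputable def rcReg (G : ℝ → ℝ) (lam : ℝ) : ℝ := sInf (G '' Ioi lam)

/-! Since all the measures live on `[0, K]`, convergence of moments upgrades, by Weierstrass
approximation, to convergence of `∫ f` for every continuous `f`. A continuous cutoff equal to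
`1` on `(-∞, a]` and `0` on `[b, ∞)` squeezes `μ[0, a] ≤ ∫ cutoff dμ ≤ μ[0, b]` for each
measure, so in the limit `limsup Fᵢ(a) ≤ F(b)` and `F(a) ≤ liminf Fᵢ(b)` whenever `a < b`;
right continuity of `F` then identifies both regularizations with `F`. -/

open Topology Polynomial

theorem tendsto_of_forall_approx {ι : Type*} {l : Filter ι} {u : ι → ℝ} {a : ℝ}
    (h : ∀ ε > 0, ∃ v : ι → ℝ, ∃ b, Tendsto v l (𝓝 b) ∧ (∀ᶠ i in l, |u i - v i| ≤ ε) ∧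
      |a - b| ≤ ε) :
    Tendsto u l (𝓝 a) := by
  refine Metric.tendsto_nhds.2 fun ε hε => ?_
  obtain ⟨v, b, hv, huv, hab⟩ := h (ε / 3) (by positivity)
  filter_upwards [huv, Metric.tendsto_nhds.1 hv (ε / 3) (by positivity)] with i hu hv
  rw [Real.dist_eq, abs_lt] at hv ⊢
  rw [abs_le] at hu hab
  constructor <;> linarith

theorem integrable_of_continuousOn_Icc {a b : ℝ} {ν : Measure ℝ} [IsFiniteMeasure ν]
    (hν : ∀ᵐ x ∂ν, x ∈ Icc a b) {f : ℝ → ℝ} (hf : ContinuousOn f (Icc a b)) :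
    Integrable f ν := by
  rw [← Measure.restrict_eq_self_of_ae_mem hν]
  exact hf.integrableOn_compact isCompact_Icc

theorem abs_integral_sub_integral_le {a b δ : ℝ} {ν : Measure ℝ} [IsFiniteMeasure ν]
    (hν : ∀ᵐ x ∂ν, x ∈ Icc a b) {f g : ℝ → ℝ} (hf : Integrable f ν) (hg : Integrable g ν)
    (hfg : ∀ x ∈ Icc a b, |f x - g x| ≤ δ) :
    |∫ x, f x ∂ν - ∫ x, g x ∂ν| ≤ δ * ν.real univ := by
  rw [← integral_sub hf hg, ← Real.norm_eq_abs]
  exact norm_integral_le_of_norm_le_const <| hν.mono fun x hx => by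
    rw [Real.norm_eq_abs]
    exact hfg x hx

theorem tendsto_integral_of_tendsto_integral_polynomial {ι : Type*} {l : Filter ι} {a b : ℝ}
    {μ : Measure ℝ} {μs : ι → Measure ℝ} [IsFiniteMeasure μ] [∀ i, IsFiniteMeasure (μs i)]
    (hμ : ∀ᵐ x ∂μ, x ∈ Icc a b) (hμs : ∀ i, ∀ᵐ x ∂μs i, x ∈ Icc a b)
    (hmom : ∀ p : ℝ[X], Tendsto (fun i => ∫ x, p.eval x ∂μs i) l (𝓝 (∫ x, p.eval x ∂μ)))
    {f : ℝ → ℝ} (hf : ContinuousOn f (Icc a b)) :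
    Tendsto (fun i => ∫ x, f x ∂μs i) l (𝓝 (∫ x, f x ∂μ)) := by
  have hmass : Tendsto (fun i => (μs i).real univ) l (𝓝 (μ.real univ)) := by
    simpa using hmom 1
  set M := μ.real univ + 1
  have hM : 0 < M := by positivity
  refine tendsto_of_forall_approx fun ε hε => ?_
  obtain ⟨p, hp⟩ := exists_polynomial_near_of_continuousOn a b f hf (ε / M) (by positivity)
  have hfp : ∀ x ∈ Icc a b, |f x - p.eval x| ≤ ε / M := fun x hx => by
    rw [abs_sub_comm]
    exact (hp x hx).le
  have approx : ∀ (ν : Measure ℝ) [IsFiniteMeasure ν], (∀ᵐ x ∂ν, x ∈ Icc a b) →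
      ν.real univ ≤ M → |∫ x, f x ∂ν - ∫ x, p.eval x ∂ν| ≤ ε := fun ν _ hν hνM =>
    calc |∫ x, f x ∂ν - ∫ x, p.eval x ∂ν| ≤ ε / M * ν.real univ :=
          abs_integral_sub_integral_le hν (integrable_of_continuousOn_Icc hν hf)
            (integrable_of_continuousOn_Icc hν p.continuousOn) hfp
      _ ≤ ε / M * M := by gcongr
      _ = ε := div_mul_cancel₀ ε hM.ne'
  refine ⟨_, _, hmom p, ?_, approx μ hμ (lt_add_one _).le⟩
  filter_upwards [hmass.eventually_le_const (lt_add_one _)] with i hi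
  exact approx (μs i) (hμs i) hi

noncomputable def cutoff (a b x : ℝ) : ℝ := Real.smoothTransition ((b - x) / (b - a))

section Cutoff

variable {a b x : ℝ}

theorem continuous_cutoff (a b : ℝ) : Continuous (cutoff a b) :=
  Real.smoothTransition.continuous.comp (by fun_prop)

theorem cutoff_nonneg : 0 ≤ cutoff a b x := Real.smoothTransition.nonneg _

theorem cutoff_le_one : cutoff a b x ≤ 1 := Real.smoothTransition.le_one _

theorem cutoff_of_le (hab : a < b) (hx : x ≤ a) : cutoff a b x = 1 :=
  Real.smoothTransition.one_of_one_le <| (one_le_div (sub_pos.2 hab)).2 (by linarith)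

theorem cutoff_of_ge (hab : a < b) (hx : b ≤ x) : cutoff a b x = 0 :=
  Real.smoothTransition.zero_of_nonpos <|
    div_nonpos_of_nonpos_of_nonneg (by linarith) (by linarith)

theorem integrable_cutoff (a b : ℝ) (ν : Measure ℝ) [IsFiniteMeasure ν] :
    Integrable (cutoff a b) ν :=
  .of_bound (continuous_cutoff a b).aestronglyMeasurable 1 <| .of_forall fun _ => by
    rw [Real.norm_of_nonneg cutoff_nonneg]
    exact cutoff_le_one

end Cutoff

theorem sdf_nonneg (ν : Measure ℝ) (t : ℝ) : 0 ≤ sdf ν t := ENNReal.toReal_nonneg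

section SpectralDensity

variable (ν : Measure ℝ) [IsFiniteMeasure ν]

theorem sdf_le_measureReal_univ (t : ℝ) : sdf ν t ≤ ν.real univ :=
  measureReal_mono (subset_univ _)

theorem tendsto_sdf_nhdsGT (lam : ℝ) : Tendsto (sdf ν) (𝓝[>] lam) (𝓝 (sdf ν lam)) := by
  have hIcc : ⋂ r > lam, Icc (0 : ℝ) r = Icc 0 lam := by
    ext x
    simp only [mem_iInter₂, mem_Icc]
    exact ⟨fun h => ⟨(h (lam + 1) (lt_add_one lam)).1,
      le_of_forall_gt_imp_ge_of_dense fun r hr => (h r hr).2⟩,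
      fun h r hr => ⟨h.1, h.2.trans hr.le⟩⟩
  have h := tendsto_measure_biInter_gt (μ := ν) (s := Icc 0) (a := lam)
    (fun _ _ => nullMeasurableSet_Icc) (fun _ _ _ hij => Icc_subset_Icc_right hij)
    ⟨lam + 1, lt_add_one lam, measure_ne_top _ _⟩
  rw [hIcc] at h
  exact (ENNReal.tendsto_toReal (measure_ne_top _ _)).comp h

variable {ν} {a b : ℝ}

theorem sdf_le_integral_cutoff (hab : a < b) : sdf ν a ≤ ∫ x, cutoff a b x ∂ν := by
  rw [sdf, ← measureReal_def, ← integral_indicator_one measurableSet_Icc]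
  refine integral_mono ((integrable_const 1).indicator measurableSet_Icc)
    (integrable_cutoff a b ν) fun x => ?_
  by_cases hx : x ∈ Icc 0 a
  · simp [indicator_of_mem hx, cutoff_of_le hab hx.2]
  · simp [indicator_of_notMem hx, cutoff_nonneg]

theorem integral_cutoff_le_sdf (hν : ∀ᵐ x ∂ν, 0 ≤ x) (hab : a < b) :
    ∫ x, cutoff a b x ∂ν ≤ sdf ν b := by
  rw [sdf, ← measureReal_def, ← integral_indicator_one measurableSet_Icc]
  refine integral_mono_ae (integrable_cutoff a b ν)
    ((integrable_const 1).indicator measurableSet_Icc) ?_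
  filter_upwards [hν] with x hx
  rcases le_or_gt x b with hxb | hbx
  · simp [indicator_of_mem (show x ∈ Icc 0 b from ⟨hx, hxb⟩), cutoff_le_one]
  · simp [indicator_of_notMem (fun h : x ∈ Icc 0 b => hbx.not_ge h.2), cutoff_of_ge hab hbx.le]

end SpectralDensity

section RightRegularization

variable {G H : ℝ → ℝ} {lam c : ℝ}

theorem le_rcReg (h : ∀ t > lam, c ≤ G t) : c ≤ rcReg G lam :=
  le_csInf ⟨G (lam + 1), mem_image_of_mem G (lt_add_one lam)⟩ (forall_mem_image.2 h)

theorem rcReg_le (hG : BddBelow (G '' Ioi lam)) {t : ℝ} (ht : lam < t) : rcReg G lam ≤ G t :=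
  csInf_le hG (mem_image_of_mem G ht)

theorem rcReg_mono (hG : BddBelow (G '' Ioi lam)) (h : ∀ t > lam, G t ≤ H t) :
    rcReg G lam ≤ rcReg H lam :=
  le_rcReg fun t ht => (rcReg_le hG ht).trans (h t ht)

theorem rcReg_le_of_tendsto (hG : BddBelow (G '' Ioi lam)) (h : ∀ t > lam, G t ≤ H t)
    (hH : Tendsto H (𝓝[>] lam) (𝓝 c)) : rcReg G lam ≤ c :=
  ge_of_tendsto hH <| eventually_nhdsWithin_of_forall fun t ht =>
    (rcReg_le hG ht).trans (h t ht)

end RightRegularization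

section WeakLimit

variable {ι : Type*} {l : Filter ι} {μ : Measure ℝ} {μs : ι → Measure ℝ}
  [∀ i, IsFiniteMeasure (μs i)]
  (hconv : ∀ f : ℝ → ℝ, Continuous f →
    Tendsto (fun i => ∫ x, f x ∂μs i) l (𝓝 (∫ x, f x ∂μ)))
include hconv

theorem isBoundedUnder_le_sdf (t : ℝ) : IsBoundedUnder (· ≤ ·) l fun i => sdf (μs i) t := by
  have hmass : Tendsto (fun i => (μs i).real univ) l (𝓝 (μ.real univ)) := by
    simpa using hconv (fun _ => 1) continuous_const
  exact hmass.isBoundedUnder_le.mono_le (.of_forall fun i => sdf_le_measureReal_univ _ t)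

variable [l.NeBot]

theorem liminf_sdf_nonneg (t : ℝ) : 0 ≤ liminf (fun i => sdf (μs i) t) l :=
  le_liminf_of_le (isBoundedUnder_le_sdf hconv t).isCoboundedUnder_ge
    (.of_forall fun _ => sdf_nonneg _ t)

theorem liminf_sdf_le_limsup_sdf (t : ℝ) :
    liminf (fun i => sdf (μs i) t) l ≤ limsup (fun i => sdf (μs i) t) l :=
  liminf_le_limsup (isBoundedUnder_le_sdf hconv t)
    (isBoundedUnder_of ⟨0, fun _ => sdf_nonneg _ t⟩)

variable [IsFiniteMeasure μ]

theorem limsup_sdf_le_sdf_of_lt (hμ : ∀ᵐ x ∂μ, 0 ≤ x) {t b : ℝ} (htb : t < b) :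
    limsup (fun i => sdf (μs i) t) l ≤ sdf μ b := by
  have hlim := hconv _ (continuous_cutoff t b)
  calc limsup (fun i => sdf (μs i) t) l
      ≤ limsup (fun i => ∫ x, cutoff t b x ∂μs i) l :=
        limsup_le_limsup (.of_forall fun i => sdf_le_integral_cutoff htb)
          (isBoundedUnder_of ⟨0, fun _ => sdf_nonneg _ t⟩).isCoboundedUnder_le
          hlim.isBoundedUnder_le
    _ = ∫ x, cutoff t b x ∂μ := hlim.limsup_eq
    _ ≤ sdf μ b := integral_cutoff_le_sdf hμ htb

theorem limsup_sdf_le_sdf (hμ : ∀ᵐ x ∂μ, 0 ≤ x) (t : ℝ) :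
    limsup (fun i => sdf (μs i) t) l ≤ sdf μ t :=
  ge_of_tendsto (tendsto_sdf_nhdsGT μ t) <|
    eventually_nhdsWithin_of_forall fun _ hb => limsup_sdf_le_sdf_of_lt hconv hμ hb

theorem sdf_le_liminf_sdf (hμs : ∀ i, ∀ᵐ x ∂μs i, 0 ≤ x) {lam t : ℝ} (hlt : lam < t) :
    sdf μ lam ≤ liminf (fun i => sdf (μs i) t) l := by
  have hlim := hconv _ (continuous_cutoff lam t)
  calc sdf μ lam ≤ ∫ x, cutoff lam t x ∂μ := sdf_le_integral_cutoff hlt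
    _ = liminf (fun i => ∫ x, cutoff lam t x ∂μs i) l := hlim.liminf_eq.symm
    _ ≤ liminf (fun i => sdf (μs i) t) l :=
        liminf_le_liminf (.of_forall fun i => integral_cutoff_le_sdf (hμs i) hlt)
          hlim.isBoundedUnder_ge (isBoundedUnder_le_sdf hconv t).isCoboundedUnder_ge

end WeakLimit

theorem stmt_11_general {ι : Type*} [Preorder ι] [Nonempty ι] [IsDirected ι (· ≤ ·)]
    (K : ℝ)
    (μ : Measure ℝ) (μi : ι → Measure ℝ)
    [IsFiniteMeasure μ] [∀ i, IsFiniteMeasure (μi i)]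
    (hs : μ (Icc 0 K)ᶜ = 0) (hsi : ∀ i, (μi i) (Icc 0 K)ᶜ = 0)
    (hmom : ∀ p : Polynomial ℝ,
      Tendsto (fun i => ∫ x, p.eval x ∂(μi i)) atTop (nhds (∫ x, p.eval x ∂μ))) :
    ∀ lam : ℝ,
      limsup (fun i => sdf (μi i) lam) atTop ≤ sdf μ lam ∧
      sdf μ lam ≤ rcReg (fun t => liminf (fun i => sdf (μi i) t) atTop) lam ∧
      sdf μ lam = rcReg (fun t => liminf (fun i => sdf (μi i) t) atTop) lam ∧
      sdf μ lam = rcReg (fun t => limsup (fun i => sdf (μi i) t) atTop) lam := by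
  intro lam
  have hμ : ∀ᵐ x ∂μ, x ∈ Icc 0 K := mem_ae_iff.2 hs
  have hμi (i : ι) : ∀ᵐ x ∂μi i, x ∈ Icc 0 K := mem_ae_iff.2 (hsi i)
  have hconv (f : ℝ → ℝ) (hf : Continuous f) :=
    tendsto_integral_of_tendsto_integral_polynomial hμ hμi hmom hf.continuousOn
  set Finf := fun t => liminf (fun i => sdf (μi i) t) atTop
  set Fsup := fun t => limsup (fun i => sdf (μi i) t) atTop
  have hμ₀ : ∀ᵐ x ∂μ, 0 ≤ x := hμ.mono fun _ hx => hx.1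
  have hFinf : BddBelow (Finf '' Ioi lam) :=
    ⟨0, forall_mem_image.2 fun t _ => liminf_sdf_nonneg hconv t⟩
  have hFsup : BddBelow (Fsup '' Ioi lam) :=
    ⟨0, forall_mem_image.2 fun t _ =>
      (liminf_sdf_nonneg hconv t).trans (liminf_sdf_le_limsup_sdf hconv t)⟩
  have lower : sdf μ lam ≤ rcReg Finf lam :=
    le_rcReg fun _ ht => sdf_le_liminf_sdf hconv (fun i => (hμi i).mono fun _ hx => hx.1) ht
  have mono : rcReg Finf lam ≤ rcReg Fsup lam :=
    rcReg_mono hFinf fun t _ => liminf_sdf_le_limsup_sdf hconv t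
  have upper : rcReg Fsup lam ≤ sdf μ lam :=
    rcReg_le_of_tendsto hFsup (fun t _ => limsup_sdf_le_sdf hconv hμ₀ t)
      (tendsto_sdf_nhdsGT μ lam)
  exact ⟨limsup_sdf_le_sdf hconv hμ₀ lam, lower, lower.antisymm (mono.trans upper),
    (lower.trans mono).antisymm upper⟩

/-- Approximation of spectral density functions.  `Δ` (with spectral measure `μ` w.r.t.
`tr_π`) and the net `Δᵢ` (with spectral measures `μᵢ` w.r.t. the normalized traces
`trᵢ`) satisfy: (a) a uniform norm bound `K` (all spectral measures live on `[0, K]`,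
with total mass `d`), and (b) `tr_π(p(Δ)) = limᵢ trᵢ(p(Δᵢ))` for every polynomial `p`.
Then with `F̄(lam) := limsupᵢ F_{Δᵢ}(lam)` and `F̲(lam) := liminfᵢ F_{Δᵢ}(lam)` we have
`F̄(lam) ≤ F_Δ(lam) ≤ F̲⁺(lam)` and `F_Δ(lam) = F̲⁺(lam) = F̄⁺(lam)` for all `lam`. -/
theorem stmt_11 {ι : Type*} [Preorder ι] [Nonempty ι] [IsDirected ι (· ≤ ·)]
    (d : ℕ) (K : ℝ)
    (μ : Measure ℝ) (μi : ι → Measure ℝ)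
    [IsFiniteMeasure μ] [∀ i, IsFiniteMeasure (μi i)]
    (hs : μ (Icc 0 K)ᶜ = 0) (hsi : ∀ i, (μi i) (Icc 0 K)ᶜ = 0)
    (hd : (μ Set.univ).toReal = d) (hdi : ∀ i, ((μi i) Set.univ).toReal = d)
    (hmom : ∀ p : Polynomial ℝ,
      Tendsto (fun i => ∫ x, p.eval x ∂(μi i)) atTop (nhds (∫ x, p.eval x ∂μ))) :
    ∀ lam : ℝ,
      limsup (fun i => sdf (μi i) lam) atTop ≤ sdf μ lam ∧
      sdf μ lam ≤ rcReg (fun t => liminf (fun i => sdf (μi i) t) atTop) lam ∧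
      sdf μ lam = rcReg (fun t => liminf (fun i => sdf (μi i) t) atTop) lam ∧
      sdf μ lam = rcReg (fun t => limsup (fun i => sdf (μi i) t) atTop) lam :=
  stmt_11_general K μ μi hs hsi hmom
end
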